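/- arXiv:2510.15069 — 3 statements merged into one kernel-verified Lean document; each statement's English description precedes it below -/
import Mathlib

section
/- Let u : ℝ × ℝ → ℝ (arguments (x, t)) have continuous partial derivatives ∂ₜu, ∂ₓu, ∂ₓ²u, ∂ₓ³u, and let λ ∈ ℝ. Define the 2×2 real matrix fields U = [[λ, u], [−u, −λ]] and V = [[−4λ³ − 2u²λ, −4uλ² − 2(∂ₓu)λ − 2u³ − ∂ₓ²u], [4uλ² − 2(∂ₓu)λ + 2u³ + ∂ₓ²u, 4λ³ + 2u²λ]]. Then the zero-curvature condition ∂ₜU − ∂ₓV + U·V − V·U = 0 (as 2×2 matrices, at every point (x, t)) holds if and only if u satisfies the modified Korteweg–de Vries equation ∂ₜu + 6·u²·∂ₓu + ∂ₓ³u = 0 everywhere. -/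
/-!
Everything is pointwise in the jet `(u, u_t, u_x, u_xx, u_xxx)`: the entries of `U` and `V` are
polynomials in `λ, u, u_x, u_xx`, so `∂ₜU` and `∂ₓV` are obtained by the chain rule, and a
direct computation shows that `∂ₜU − ∂ₓV + [U, V] = !![0, E; −E, 0]` with
`E = u_t + 6 u² u_x + u_xxx`. All powers of `λ` cancel, so the zero-curvature matrix vanishes
exactly where `E` does.
-/

theorem ContDiff.hasDerivAt_iteratedDeriv {𝕜 F : Type*} [NontriviallyNormedField 𝕜]
    [NormedAddCommGroup F] [NormedSpace 𝕜 F] {f : 𝕜 → F} {n : WithTop ℕ∞} {m : ℕ}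
    (hf : ContDiff 𝕜 n f) (hmn : m < n) (x : 𝕜) :
    HasDerivAt (iteratedDeriv m f) (iteratedDeriv (m + 1) f x) x := by
  rw [iteratedDeriv_succ]
  exact (hf.differentiable_iteratedDeriv m hmn x).hasDerivAt

namespace MKdV

section Algebra

variable {R : Type*} [CommRing R]

def laxU (lam a : R) : Matrix (Fin 2) (Fin 2) R :=
  !![lam, a; -a, -lam]

/-- `V` as a function of the jet `a = u`, `b = u_x`, `c = u_xx`. -/
def laxV (lam a b c : R) : Matrix (Fin 2) (Fin 2) R :=
  !![-4 * lam ^ 3 - 2 * a ^ 2 * lam, -4 * a * lam ^ 2 - 2 * b * lam - 2 * a ^ 3 - c;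
     4 * a * lam ^ 2 - 2 * b * lam + 2 * a ^ 3 + c, 4 * lam ^ 3 + 2 * a ^ 2 * lam]

/-- The derivative of `laxV lam a b c` along a curve where `a, b, c` have derivatives
`a', b', c'`. -/
def laxVDeriv (lam a a' b' c' : R) : Matrix (Fin 2) (Fin 2) R :=
  !![-4 * a * a' * lam, -4 * a' * lam ^ 2 - 2 * b' * lam - 6 * a ^ 2 * a' - c';
     4 * a' * lam ^ 2 - 2 * b' * lam + 6 * a ^ 2 * a' + c', 4 * a * a' * lam]

theorem zeroCurvature_eq (lam a aₜ b c d : R) :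
    !![0, aₜ; -aₜ, 0] - laxVDeriv lam a b c d
        + (laxU lam a * laxV lam a b c - laxV lam a b c * laxU lam a)
      = !![0, aₜ + 6 * a ^ 2 * b + d; -(aₜ + 6 * a ^ 2 * b + d), 0] := by
  simp only [laxU, laxV, laxVDeriv, Matrix.mul_fin_two]
  ext i j
  fin_cases i <;> fin_cases j <;> simp <;> ring

end Algebra

section Calculus

variable {𝕜 : Type*} [NontriviallyNormedField 𝕜] (lam : 𝕜)

theorem hasDerivAt_laxU_apply {a : 𝕜 → 𝕜} {a' t : 𝕜} (ha : HasDerivAt a a' t) (i j : Fin 2) :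
    HasDerivAt (fun s => laxU lam (a s) i j) (!![0, a'; -a', 0] i j) t := by
  fin_cases i <;> fin_cases j <;> simp only [laxU]
  · exact hasDerivAt_const t lam
  · simpa using ha
  · exact ha.neg
  · simpa using hasDerivAt_const t (-lam)

theorem hasDerivAt_laxV_apply {a b c : 𝕜 → 𝕜} {a' b' c' x : 𝕜} (ha : HasDerivAt a a' x)
    (hb : HasDerivAt b b' x) (hc : HasDerivAt c c' x) (i j : Fin 2) :
    HasDerivAt (fun y => laxV lam (a y) (b y) (c y) i j) (laxVDeriv lam (a x) a' b' c' i j) x := by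
  have ha2 := (ha.fun_pow 2).const_mul 2
  have ha3 := (ha.fun_pow 3).const_mul 2
  fin_cases i <;> fin_cases j <;>
    simp only [laxV, laxVDeriv, Matrix.of_apply, Matrix.cons_val', Matrix.cons_val_zero,
      Matrix.cons_val_one, Matrix.cons_val_fin_one, Matrix.empty_val', Fin.zero_eta, Fin.mk_one]
  · exact ((hasDerivAt_const x _).sub (ha2.mul_const lam)).congr_deriv (by ring)
  · exact ((((ha.const_mul (-4)).mul_const (lam ^ 2)).sub ((hb.const_mul 2).mul_const lam)).sub
      ha3).sub hc |>.congr_deriv (by ring)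
  · exact ((((ha.const_mul 4).mul_const (lam ^ 2)).sub ((hb.const_mul 2).mul_const lam)).add
      ha3).add hc |>.congr_deriv (by ring)
  · exact ((hasDerivAt_const x _).add (ha2.mul_const lam)).congr_deriv (by ring)

end Calculus

end MKdV

open MKdV in
theorem stmt_3_general (u : ℝ → ℝ → ℝ) (lam : ℝ)
    (hux : ∀ t : ℝ, ContDiff ℝ 3 (fun x => u x t))
    (hut : ∀ x : ℝ, Differentiable ℝ (fun t => u x t))
    (U V : ℝ → ℝ → Matrix (Fin 2) (Fin 2) ℝ)
    (hU : ∀ x t : ℝ, U x t = !![lam, u x t; -u x t, -lam])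
    (hV : ∀ x t : ℝ, V x t =
      !![-4 * lam ^ 3 - 2 * (u x t) ^ 2 * lam,
          -4 * u x t * lam ^ 2 - 2 * deriv (fun y => u y t) x * lam - 2 * (u x t) ^ 3
            - iteratedDeriv 2 (fun y => u y t) x;
         4 * u x t * lam ^ 2 - 2 * deriv (fun y => u y t) x * lam + 2 * (u x t) ^ 3
            + iteratedDeriv 2 (fun y => u y t) x,
          4 * lam ^ 3 + 2 * (u x t) ^ 2 * lam]) :
    (∀ (x t : ℝ) (i j : Fin 2),
        deriv (fun s => U x s i j) t - deriv (fun y => V y t i j) x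
          + (U x t * V x t - V x t * U x t) i j = 0)
      ↔ (∀ x t : ℝ,
          deriv (fun s => u x s) t + 6 * (u x t) ^ 2 * deriv (fun y => u y t) x
            + iteratedDeriv 3 (fun y => u y t) x = 0) := by
  set E := fun x t => deriv (fun s => u x s) t + 6 * (u x t) ^ 2 * deriv (fun y => u y t) x
    + iteratedDeriv 3 (fun y => u y t) x
  have key : ∀ (x t : ℝ) (i j : Fin 2),
      deriv (fun s => U x s i j) t - deriv (fun y => V y t i j) x
        + (U x t * V x t - V x t * U x t) i j = !![0, E x t; -E x t, 0] i j := by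
    intro x t i j
    have hu₀ := (hux t).hasDerivAt_iteratedDeriv (m := 0) (by norm_num) x
    have hu₁ := (hux t).hasDerivAt_iteratedDeriv (m := 1) (by norm_num) x
    have hu₂ := (hux t).hasDerivAt_iteratedDeriv (m := 2) (by norm_num) x
    simp only [iteratedDeriv_zero, iteratedDeriv_one, zero_add] at hu₀ hu₁
    obtain rfl : U = fun x t => laxU lam (u x t) := funext₂ hU
    obtain rfl : V = fun x t => laxV lam (u x t) (deriv (fun y => u y t) x)
        (iteratedDeriv 2 (fun y => u y t) x) := funext₂ hV
    beta_reduce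
    rw [(hasDerivAt_laxU_apply lam (hut x t).hasDerivAt i j).deriv,
      (hasDerivAt_laxV_apply lam hu₀ hu₁ hu₂ i j).deriv, ← zeroCurvature_eq]
    rfl
  refine ⟨fun h x t => ?_, fun h x t i j => ?_⟩
  · simpa [E] using (key x t 0 1).symm.trans (h x t 0 1)
  · rw [key, show E x t = 0 from h x t]
    fin_cases i <;> fin_cases j <;> simp

/-- For the mKdV Lax connection `U = [[λ, u], [−u, −λ]]`,
`V = [[−4λ³ − 2u²λ, −4uλ² − 2u_xλ − 2u³ − u_xx], [4uλ² − 2u_xλ + 2u³ + u_xx, 4λ³ + 2u²λ]]`,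
the zero-curvature condition `∂ₜU − ∂ₓV + U·V − V·U = 0` holds iff `u` satisfies the
modified KdV equation `∂ₜu + 6·u²·∂ₓu + ∂ₓ³u = 0`. -/
theorem stmt_3 (u : ℝ → ℝ → ℝ) (lam : ℝ)
    (hux : ∀ t : ℝ, ContDiff ℝ 3 (fun x => u x t))
    (hut : ∀ x : ℝ, Differentiable ℝ (fun t => u x t))
    (hcont_t : Continuous fun p : ℝ × ℝ => deriv (fun s => u p.1 s) p.2)
    (hcont_x : ∀ k : ℕ, k ≤ 3 →
      Continuous fun p : ℝ × ℝ => iteratedDeriv k (fun y => u y p.2) p.1)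
    (U V : ℝ → ℝ → Matrix (Fin 2) (Fin 2) ℝ)
    (hU : ∀ x t : ℝ, U x t = !![lam, u x t; -u x t, -lam])
    (hV : ∀ x t : ℝ, V x t =
      !![-4 * lam ^ 3 - 2 * (u x t) ^ 2 * lam,
          -4 * u x t * lam ^ 2 - 2 * deriv (fun y => u y t) x * lam - 2 * (u x t) ^ 3
            - iteratedDeriv 2 (fun y => u y t) x;
         4 * u x t * lam ^ 2 - 2 * deriv (fun y => u y t) x * lam + 2 * (u x t) ^ 3
            + iteratedDeriv 2 (fun y => u y t) x,
          4 * lam ^ 3 + 2 * (u x t) ^ 2 * lam]) :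
    (∀ (x t : ℝ) (i j : Fin 2),
        deriv (fun s => U x s i j) t - deriv (fun y => V y t i j) x
          + (U x t * V x t - V x t * U x t) i j = 0)
      ↔ (∀ x t : ℝ,
          deriv (fun s => u x s) t + 6 * (u x t) ^ 2 * deriv (fun y => u y t) x
            + iteratedDeriv 3 (fun y => u y t) x = 0) :=
  stmt_3_general u lam hux hut U V hU hV
end

section
/- (Manakov spectral shift for the Euler top.) Let I₁, I₂, I₃ be real constants and Ω ∈ ℝ³. Set Mᵢ = Iᵢ·Ωᵢ and define the 3×3 real matrices L = [[0, −M₃, M₂], [M₃, 0, −M₁], [−M₂, M₁, 0]], P = [[0, −Ω₃, Ω₂], [Ω₃, 0, −Ω₁], [−Ω₂, Ω₁, 0]], and the diagonal matrix J = (1/2)·diag(I₂ + I₃ − I₁, I₁ + I₃ − I₂, I₁ + I₂ − I₃). Then [L, J] + [J², P] = 0, and consequently for every λ ∈ ℝ, [L + λ·J², P + λ·J] = [L, P]. In particular, if Ω : ℝ → ℝ³ is differentiable and dL/dt = [L, P] holds along the trajectory, then d/dt(L + λ·J²) = [L + λ·J², P + λ·J] holds for every λ ∈ ℝ. -/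
/-- Manakov spectral shift for the Euler top: with
`J = (1/2)·diag(I₂+I₃−I₁, I₁+I₃−I₂, I₁+I₂−I₃)` one has `[L, J] + [J², P] = 0`, hence
`[L + λJ², P + λJ] = [L, P]` for every `λ`; in particular, if `dL/dt = [L, P]` holds
along a differentiable trajectory `Ω(t)`, then `d/dt(L + λJ²) = [L + λJ², P + λJ]`. -/
theorem stmt_5 (I₁ I₂ I₃ : ℝ) (Ω₁ Ω₂ Ω₃ : ℝ → ℝ)
    (hΩ₁ : Differentiable ℝ Ω₁) (hΩ₂ : Differentiable ℝ Ω₂) (hΩ₃ : Differentiable ℝ Ω₃)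
    (L P : ℝ → Matrix (Fin 3) (Fin 3) ℝ) (J : Matrix (Fin 3) (Fin 3) ℝ)
    (hL : ∀ t : ℝ, L t =
      !![0, -(I₃ * Ω₃ t), I₂ * Ω₂ t;
         I₃ * Ω₃ t, 0, -(I₁ * Ω₁ t);
         -(I₂ * Ω₂ t), I₁ * Ω₁ t, 0])
    (hP : ∀ t : ℝ, P t =
      !![0, -Ω₃ t, Ω₂ t;
         Ω₃ t, 0, -Ω₁ t;
         -Ω₂ t, Ω₁ t, 0])
    (hJ : J = (1 / 2 : ℝ) • Matrix.diagonal ![I₂ + I₃ - I₁, I₁ + I₃ - I₂, I₁ + I₂ - I₃]) :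
    (∀ t : ℝ, (L t * J - J * L t) + (J ^ 2 * P t - P t * J ^ 2) = 0)
    ∧ (∀ (lam t : ℝ),
        (L t + lam • J ^ 2) * (P t + lam • J) - (P t + lam • J) * (L t + lam • J ^ 2)
          = L t * P t - P t * L t)
    ∧ ((∀ (t : ℝ) (i j : Fin 3),
          deriv (fun s => L s i j) t = (L t * P t - P t * L t) i j) →
        ∀ (lam t : ℝ) (i j : Fin 3),
          deriv (fun s => (L s + lam • J ^ 2) i j) t
            = ((L t + lam • J ^ 2) * (P t + lam • J)
                - (P t + lam • J) * (L t + lam • J ^ 2)) i j) := by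

  have hJ' : J = !![(I₂ + I₃ - I₁)/2, 0, 0; 0, (I₁ + I₃ - I₂)/2, 0; 0, 0, (I₁ + I₂ - I₃)/2] := by
    rw [hJ]
    ext i j
    fin_cases i <;> fin_cases j <;>
      simp [Matrix.diagonal, Matrix.vecHead, Matrix.vecTail] <;> ring
  have key1 : ∀ t : ℝ, (L t * J - J * L t) + (J ^ 2 * P t - P t * J ^ 2) = 0 := by
    intro t
    rw [hL, hP, hJ']
    ext i j
    fin_cases i <;> fin_cases j <;>
      simp [Matrix.mul_apply, Fin.sum_univ_three, pow_two] <;> ring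
  have key2 : ∀ (lam t : ℝ),
      (L t + lam • J ^ 2) * (P t + lam • J) - (P t + lam • J) * (L t + lam • J ^ 2)
        = L t * P t - P t * L t := by
    intro lam t
    have hc : J ^ 2 * J = J * J ^ 2 := by rw [← pow_succ, ← pow_succ']
    calc (L t + lam • J ^ 2) * (P t + lam • J) - (P t + lam • J) * (L t + lam • J ^ 2)
        = (L t * P t - P t * L t)
          + lam • ((L t * J - J * L t) + (J ^ 2 * P t - P t * J ^ 2))
          + (lam * lam) • (J ^ 2 * J - J * J ^ 2) := by
          simp only [mul_add, add_mul, smul_add, smul_sub, mul_smul_comm,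
            smul_mul_assoc, smul_smul]
          abel
      _ = L t * P t - P t * L t := by
          rw [key1 t, hc]; simp
  refine ⟨key1, key2, ?_⟩
  intro hlax lam t i j
  have hconst : (fun s => (L s + lam • J ^ 2) i j)
      = fun s => L s i j + (lam • J ^ 2) i j := by
    funext s; simp [Matrix.add_apply]
  rw [hconst, deriv_add_const, hlax t i j, key2 lam t]
end

section
/- Let n ≥ 1, let L : ℝ → Matrix(n, n, ℝ) be differentiable and P : ℝ → Matrix(n, n, ℝ) be arbitrary, and suppose the Lax equation L'(t) = P(t)·L(t) − L(t)·P(t) holds for all t. Then for every natural number k, the function t ↦ trace(L(t)^k) is constant on ℝ. -/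
/-!
Along a Lax flow `L' = ⁅P, L⁆`, the product rule shows by induction on `k` that
`(L ^ k)' = ⁅P, L ^ k⁆`, because `⁅P, ·⁆` is a derivation. Taking traces, the derivative of
`trace (L ^ k)` is the trace of a commutator, which vanishes; so `trace (L ^ k)` is constant.
-/

open Matrix

section MatrixCalculus

variable {𝕜 𝔸 : Type*} [NontriviallyNormedField 𝕜] [NormedRing 𝔸] [NormedAlgebra 𝕜 𝔸]
  {l m n : Type*} {t : 𝕜}

theorem Matrix.hasDerivAt_iff [Fintype n] {f : 𝕜 → Matrix m n 𝔸} {f' : Matrix m n 𝔸} :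
    HasDerivAt f f' t ↔ ∀ i j, HasDerivAt (fun s => f s i j) (f' i j) t :=
  (hasDerivAt_pi (E' := fun _ => n → 𝔸)).trans <| forall_congr' fun _ => hasDerivAt_pi

theorem HasDerivAt.matrix_mul [Fintype m] [Fintype n] {A : 𝕜 → Matrix l m 𝔸}
    {B : 𝕜 → Matrix m n 𝔸} {A' : Matrix l m 𝔸} {B' : Matrix m n 𝔸} (hA : HasDerivAt A A' t)
    (hB : HasDerivAt B B' t) :
    HasDerivAt (fun s => A s * B s) (A' * B t + A t * B') t := by
  rw [Matrix.hasDerivAt_iff] at hA hB ⊢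
  intro i j
  simp only [Matrix.add_apply, Matrix.mul_apply, ← Finset.sum_add_distrib]
  exact HasDerivAt.fun_sum fun k _ => (hA i k).mul (hB k j)

theorem HasDerivAt.matrix_trace [Fintype n] {f : 𝕜 → Matrix n n 𝔸} {f' : Matrix n n 𝔸}
    (hf : HasDerivAt f f' t) : HasDerivAt (fun s => (f s).trace) f'.trace t :=
  HasDerivAt.fun_sum fun i _ => Matrix.hasDerivAt_iff.1 hf i i

theorem HasDerivAt.matrix_pow_lie [Fintype n] [DecidableEq n] {L : 𝕜 → Matrix n n 𝔸}
    {P : Matrix n n 𝔸} (hL : HasDerivAt L ⁅P, L t⁆ t) (k : ℕ) :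
    HasDerivAt (fun s => L s ^ k) ⁅P, L t ^ k⁆ t := by
  induction k with
  | zero =>
    simpa only [pow_zero, Ring.lie_def, mul_one, one_mul, sub_self] using
      Matrix.hasDerivAt_iff.2 fun _ _ => hasDerivAt_const t _
  | succ k ih =>
    have hderiv : ⁅P, L t ^ k⁆ * L t + L t ^ k * ⁅P, L t⁆ = ⁅P, L t ^ (k + 1)⁆ := by
      simp only [Ring.lie_def, pow_succ]
      noncomm_ring
    simpa only [pow_succ, hderiv] using ih.matrix_mul hL

end MatrixCalculus

theorem Matrix.trace_lie {n 𝔸 : Type*} [Fintype n] [CommRing 𝔸] (A B : Matrix n n 𝔸) :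
    ⁅A, B⁆.trace = 0 := by
  rw [Ring.lie_def, trace_sub, trace_mul_comm, sub_self]

theorem Matrix.trace_pow_eq_of_lax {𝕜 𝔸 n : Type*} [RCLike 𝕜] [NormedCommRing 𝔸]
    [NormedAlgebra 𝕜 𝔸] [Fintype n] [DecidableEq n] {L P : 𝕜 → Matrix n n 𝔸}
    (hL : ∀ t, HasDerivAt L ⁅P t, L t⁆ t) (k : ℕ) (t₁ t₂ : 𝕜) :
    (L t₁ ^ k).trace = (L t₂ ^ k).trace := by
  have htrace (t : 𝕜) : HasDerivAt (fun s => (L s ^ k).trace) 0 t := by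
    simpa only [trace_lie] using ((hL t).matrix_pow_lie k).matrix_trace
  exact is_const_of_deriv_eq_zero (fun t => (htrace t).differentiableAt)
    (fun t => (htrace t).deriv) t₁ t₂

theorem stmt_6_general (n : ℕ)
    (L P : ℝ → Matrix (Fin n) (Fin n) ℝ)
    (hLdiff : ∀ i j : Fin n, Differentiable ℝ (fun t => L t i j))
    (hLax : ∀ (t : ℝ) (i j : Fin n),
      deriv (fun s => L s i j) t = (P t * L t - L t * P t) i j) :
    ∀ k : ℕ, ∀ t₁ t₂ : ℝ, Matrix.trace (L t₁ ^ k) = Matrix.trace (L t₂ ^ k) := by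
  refine Matrix.trace_pow_eq_of_lax (P := P) fun t => Matrix.hasDerivAt_iff.2 fun i j => ?_
  rw [Ring.lie_def, ← hLax t i j]
  exact (hLdiff i j t).hasDerivAt

/-- If `L : ℝ → Matrix (Fin n) (Fin n) ℝ` is differentiable and satisfies the
Lax equation `L'(t) = P(t)·L(t) − L(t)·P(t)`, then all spectral invariants
`t ↦ trace(L(t)^k)` are constant. -/
theorem stmt_6 (n : ℕ) (hn : 1 ≤ n)
    (L P : ℝ → Matrix (Fin n) (Fin n) ℝ)
    (hLdiff : ∀ i j : Fin n, Differentiable ℝ (fun t => L t i j))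
    (hLax : ∀ (t : ℝ) (i j : Fin n),
      deriv (fun s => L s i j) t = (P t * L t - L t * P t) i j) :
    ∀ k : ℕ, ∀ t₁ t₂ : ℝ, Matrix.trace (L t₁ ^ k) = Matrix.trace (L t₂ ^ k) :=
  stmt_6_general n L P hLdiff hLax
end
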